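/- arXiv:1704.07856 — 4 statements merged into one kernel-verified Lean document; each statement's English description precedes it below -/
import Mathlib

section
/- Let Σ be a finite alphabet, L ⊆ Σ* a regular language, and M a minimal complete DFA recognizing L with finitely many states. If M contains a nontrivial cycle, i.e., there exist two distinct states p ≠ q and words u, v ∈ Σ* with δ(p,u) = q and δ(q,v) = p, then L is not piecewise testable. -/
/-- A language over `α` is piecewise testable if it is a finite Boolean combination
(unions, intersections, complements) of "piece" languages
`Σ* a₁ Σ* a₂ Σ* ⋯ Σ* aₖ Σ* = {w | a₁⋯aₖ is a subsequence of w}`. -/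
inductive PiecewiseTestable {α : Type*} : Set (List α) → Prop where
  | piece (l : List α) : PiecewiseTestable {w | l.Sublist w}
  | compl {L : Set (List α)} : PiecewiseTestable L → PiecewiseTestable Lᶜ
  | union {K L : Set (List α)} :
      PiecewiseTestable K → PiecewiseTestable L → PiecewiseTestable (K ∪ L)
  | inter {K L : Set (List α)} :
      PiecewiseTestable K → PiecewiseTestable L → PiecewiseTestable (K ∩ L)

open List

def repw {α : Type*} (s : List α) : ℕ → List α
  | 0 => []
  | n+1 => repw s n ++ s

lemma repw_add {α : Type*} (s : List α) (m n : ℕ) :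
    repw s (m + n) = repw s m ++ repw s n := by
  induction n with
  | zero => simp [repw]
  | succ n ih => simp [repw, ih]

lemma repw_sublist_mono {α : Type*} (s : List α) {m n : ℕ} (h : m ≤ n) :
    repw s m <+ repw s n := by
  obtain ⟨k, rfl⟩ := Nat.exists_eq_add_of_le h
  rw [repw_add]
  exact List.sublist_append_left _ _

lemma shrink {α : Type*} {s l : List α} {N : ℕ} (h : l <+ repw s N) :
    l <+ repw s l.length := by
  induction N generalizing l with
  | zero => simp [repw] at h; simp [h, repw]
  | succ N ih =>
    rw [repw] at h
    rw [List.sublist_append_iff] at h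
    obtain ⟨l1, l2, rfl, h1, h2⟩ := h
    rcases eq_or_ne l2 [] with rfl | hne
    · simpa using ih (by simpa using h1)
    · have h1' := ih h1
      have : l1 ++ l2 <+ repw s l1.length ++ s :=
        List.Sublist.append h1' h2
      refine this.trans ?_
      refine (List.Sublist.append_right (List.Sublist.refl _) s).trans ?_
      have : repw s l1.length ++ s = repw s (l1.length + 1) := rfl
      rw [this, List.length_append]
      exact repw_sublist_mono s (by have := List.length_pos_iff.mpr hne; omega)

lemma pt_key {α : Type*} {L : Set (List α)} (h : PiecewiseTestable L) :
    ∃ k : ℕ, ∀ x y : List α,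
      (∀ l : List α, l.length ≤ k → (l <+ x ↔ l <+ y)) → (x ∈ L ↔ y ∈ L) := by
  induction h with
  | piece l =>
    exact ⟨l.length, fun x y hxy => by simpa using hxy l le_rfl⟩
  | compl h ih =>
    obtain ⟨k, hk⟩ := ih
    exact ⟨k, fun x y hxy => by simp [Set.mem_compl_iff, hk x y hxy]⟩
  | union hK hL ihK ihL =>
    obtain ⟨k1, hk1⟩ := ihK
    obtain ⟨k2, hk2⟩ := ihL
    refine ⟨max k1 k2, fun x y hxy => ?_⟩
    have e1 := hk1 x y (fun l hl => hxy l (hl.trans (le_max_left _ _)))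
    have e2 := hk2 x y (fun l hl => hxy l (hl.trans (le_max_right _ _)))
    simp [Set.mem_union, e1, e2]
  | inter hK hL ihK ihL =>
    obtain ⟨k1, hk1⟩ := ihK
    obtain ⟨k2, hk2⟩ := ihL
    refine ⟨max k1 k2, fun x y hxy => ?_⟩
    have e1 := hk1 x y (fun l hl => hxy l (hl.trans (le_max_left _ _)))
    have e2 := hk2 x y (fun l hl => hxy l (hl.trans (le_max_right _ _)))
    simp [Set.mem_inter_iff, e1, e2]

/-- If a minimal complete DFA (all states reachable, distinct states distinguishable)
contains a nontrivial cycle, then its language is not piecewise testable. -/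
theorem stmt0 {α σ : Type*} [Fintype α] [Fintype σ] (M : DFA α σ)
    (hreach : ∀ q : σ, ∃ w : List α, M.evalFrom M.start w = q)
    (hdist : ∀ p q : σ, p ≠ q → ∃ z : List α,
      ¬ (M.evalFrom p z ∈ M.accept ↔ M.evalFrom q z ∈ M.accept))
    (p q : σ) (hpq : p ≠ q) (u v : List α)
    (hu : M.evalFrom p u = q) (hv : M.evalFrom q v = p) :
    ¬ PiecewiseTestable (M.accepts : Set (List α)) := by
  intro hPT
  obtain ⟨k, hk⟩ := pt_key hPT
  obtain ⟨w0, hw0⟩ := hreach p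
  obtain ⟨z, hz⟩ := hdist p q hpq
  set s : List α := u ++ v with hs
  -- evaluation of repeated cycle
  have hrep : ∀ n, M.evalFrom p (repw s n) = p := by
    intro n
    induction n with
    | zero => simp [repw]
    | succ n ih =>
      rw [repw, DFA.evalFrom_of_append, ih, hs, DFA.evalFrom_of_append, hu, hv]
  set X : List α := w0 ++ (repw s (2*k+1) ++ z) with hX
  set Y : List α := w0 ++ ((repw s (2*k) ++ u) ++ z) with hY
  have hmid : repw s (2*k) ++ u <+ repw s (2*k+1) := by
    rw [repw]
    exact List.Sublist.append (List.Sublist.refl _) (List.sublist_append_left _ _)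
  have hsub : ∀ l : List α, l.length ≤ k → (l <+ X ↔ l <+ Y) := by
    intro l hl
    constructor
    · intro h
      rw [hX, List.sublist_append_iff] at h
      obtain ⟨l0, rest, rfl, h0, hrest⟩ := h
      rw [List.sublist_append_iff] at hrest
      obtain ⟨lm, lz, rfl, hm, hzz⟩ := hrest
      have hlm : lm.length ≤ k := by
        simp [List.length_append] at hl; omega
      have hm' : lm <+ repw s (2*k) ++ u :=
        ((shrink hm).trans (repw_sublist_mono s (by omega))).trans
          (List.sublist_append_left _ _)
      exact List.Sublist.append h0 (List.Sublist.append hm' hzz)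
    · intro h
      refine h.trans ?_
      exact List.Sublist.append (List.Sublist.refl _)
        (List.Sublist.append hmid (List.Sublist.refl _))
  have hXY := hk X Y hsub
  have hXacc : X ∈ M.accepts ↔ M.evalFrom p z ∈ M.accept := by
    rw [DFA.mem_accepts]
    show M.evalFrom M.start X ∈ M.accept ↔ _
    rw [hX, DFA.evalFrom_of_append, hw0, DFA.evalFrom_of_append, hrep]
  have hYacc : Y ∈ M.accepts ↔ M.evalFrom q z ∈ M.accept := by
    rw [DFA.mem_accepts]
    show M.evalFrom M.start Y ∈ M.accept ↔ _
    rw [hY, DFA.evalFrom_of_append, hw0, DFA.evalFrom_of_append,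
      DFA.evalFrom_of_append, hrep, hu]
  exact hz ((hXacc.symm.trans hXY).trans hYacc)
end

section
/- Let Σ be a finite alphabet, L ⊆ Σ* a regular language, and M a minimal complete DFA recognizing L with finitely many states. If there exist three pairwise distinct states p, q, q' of M and words w, w' ∈ (Σ(q) ∩ Σ(q'))* such that δ(p,w) = q and δ(p,w') = q', then L is not piecewise testable. -/
/-!
Call `x` and `y` `n`-subword equivalent when they have the same subsequences of length at most
`n`; this is a congruence, and every piecewise testable language is saturated by it for some `n`.
With `t = w ++ w'` and `T = tⁿ`, the subsequences of length `≤ n` of both `w ++ T` and `w' ++ T`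
are exactly the words of length `≤ n` over the letters of `t`. Since these letters loop on `q`
and `q'`, from `p` the two words lead to `q` and `q'`. Prefixing a word reaching `p` and
appending one separating `q` from `q'` yields two `n`-equivalent words, exactly one accepted.
-/

open scoped List

theorem List.sublist_flatten_replicate {α : Type*} {n : ℕ} {s t : List α} (hs : s.length ≤ n)
    (hst : s ⊆ t) : s <+ (List.replicate n t).flatten := by
  induction s generalizing n with
  | nil => exact List.nil_sublist _
  | cons a s ih =>
    obtain ⟨m, rfl⟩ : ∃ m, n = m + 1 := ⟨n - 1, by simp at hs; omega⟩
    rw [List.replicate_succ, List.flatten_cons, ← List.singleton_append]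
    exact (List.singleton_sublist.mpr (hst List.mem_cons_self)).append
      (ih (by simpa using hs) (List.subset_of_cons_subset hst))

theorem List.flatten_replicate_subset {α : Type*} (n : ℕ) (t : List α) :
    (List.replicate n t).flatten ⊆ t := fun a ha => by
  obtain ⟨_, hl, ha⟩ := List.mem_flatten.mp ha
  rwa [(List.mem_replicate.mp hl).2] at ha

def SubwordEquiv {α : Type*} (n : ℕ) (x y : List α) : Prop :=
  ∀ s : List α, s.length ≤ n → (s <+ x ↔ s <+ y)

namespace SubwordEquiv

variable {α : Type*} {n : ℕ} {x y x' y' : List α}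

theorem refl (n : ℕ) (x : List α) : SubwordEquiv n x x :=
  fun _ _ => Iff.rfl

theorem symm (h : SubwordEquiv n x y) : SubwordEquiv n y x :=
  fun s hs => (h s hs).symm

theorem mono {m : ℕ} (hmn : m ≤ n) (h : SubwordEquiv n x y) : SubwordEquiv m x y :=
  fun s hs => h s (hs.trans hmn)

theorem sublist_append (h : SubwordEquiv n x y) (h' : SubwordEquiv n x' y') {s : List α}
    (hs : s.length ≤ n) (hsub : s <+ x ++ x') : s <+ y ++ y' := by
  obtain ⟨s₁, s₂, rfl, hs₁, hs₂⟩ := List.sublist_append_iff.mp hsub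
  rw [List.length_append] at hs
  exact ((h s₁ (by omega)).mp hs₁).append ((h' s₂ (by omega)).mp hs₂)

theorem append (h : SubwordEquiv n x y) (h' : SubwordEquiv n x' y') :
    SubwordEquiv n (x ++ x') (y ++ y') :=
  fun _ hs => ⟨h.sublist_append h' hs, h.symm.sublist_append h'.symm hs⟩

theorem of_flatten_replicate_sublist {t : List α} (hx : x ⊆ t) (hy : y ⊆ t)
    (hTx : (List.replicate n t).flatten <+ x) (hTy : (List.replicate n t).flatten <+ y) :
    SubwordEquiv n x y := by
  have key : ∀ {x y : List α}, x ⊆ t → (List.replicate n t).flatten <+ y →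
      ∀ s : List α, s.length ≤ n → s <+ x → s <+ y :=
    fun hx hTy s hs hsx =>
      (List.sublist_flatten_replicate hs fun a ha => hx (hsx.subset ha)).trans hTy
  exact fun s hs => ⟨key hx hTy s hs, key hy hTx s hs⟩

end SubwordEquiv

theorem PiecewiseTestable.exists_subwordEquiv {α : Type*} {K : Set (List α)}
    (hK : PiecewiseTestable K) :
    ∃ n, ∀ x y, SubwordEquiv n x y → (x ∈ K ↔ y ∈ K) := by
  induction hK with
  | piece l => exact ⟨l.length, fun x y h => h l le_rfl⟩
  | compl _ ih =>
    obtain ⟨n, hn⟩ := ih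
    exact ⟨n, fun x y h => not_congr (hn x y h)⟩
  | union _ _ ih₁ ih₂ =>
    obtain ⟨n₁, h₁⟩ := ih₁
    obtain ⟨n₂, h₂⟩ := ih₂
    exact ⟨max n₁ n₂, fun x y h =>
      or_congr (h₁ x y (h.mono (le_max_left _ _))) (h₂ x y (h.mono (le_max_right _ _)))⟩
  | inter _ _ ih₁ ih₂ =>
    obtain ⟨n₁, h₁⟩ := ih₁
    obtain ⟨n₂, h₂⟩ := ih₂
    exact ⟨max n₁ n₂, fun x y h =>
      and_congr (h₁ x y (h.mono (le_max_left _ _))) (h₂ x y (h.mono (le_max_right _ _)))⟩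

theorem DFA.evalFrom_of_forall_mem_step_eq {α σ : Type*} (M : DFA α σ) {s : σ} {x : List α}
    (h : ∀ a ∈ x, M.step s a = s) : M.evalFrom s x = s := by
  induction x with
  | nil => rfl
  | cons a x ih =>
    rw [DFA.evalFrom_cons, h a List.mem_cons_self]
    exact ih fun b hb => h b (List.mem_cons_of_mem a hb)

theorem stmt1_general {α σ : Type*} (M : DFA α σ)
    (hreach : ∀ q : σ, ∃ w : List α, M.evalFrom M.start w = q)
    (hdist : ∀ p q : σ, p ≠ q → ∃ z : List α,
      ¬ (M.evalFrom p z ∈ M.accept ↔ M.evalFrom q z ∈ M.accept))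
    (p q q' : σ) (hqq' : q ≠ q')
    (w w' : List α)
    (hw : ∀ a ∈ w, M.step q a = q ∧ M.step q' a = q')
    (hw' : ∀ a ∈ w', M.step q a = q ∧ M.step q' a = q')
    (hwq : M.evalFrom p w = q) (hwq' : M.evalFrom p w' = q') :
    ¬ PiecewiseTestable (M.accepts : Set (List α)) := by
  intro hPT
  obtain ⟨n, hn⟩ := hPT.exists_subwordEquiv
  obtain ⟨u, hu⟩ := hreach p
  obtain ⟨z, hz⟩ := hdist q q' hqq'
  set t := w ++ w'
  set T := (List.replicate n t).flatten
  have hT : T ⊆ t := List.flatten_replicate_subset n t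
  have hloop : ∀ a ∈ T, M.step q a = q ∧ M.step q' a = q' := fun a ha => by
    rcases List.mem_append.mp (hT ha) with ha | ha
    exacts [hw a ha, hw' a ha]
  have hq : M.evalFrom p (w ++ T) = q := by
    rw [DFA.evalFrom_of_append, hwq, M.evalFrom_of_forall_mem_step_eq fun a ha => (hloop a ha).1]
  have hq' : M.evalFrom p (w' ++ T) = q' := by
    rw [DFA.evalFrom_of_append, hwq', M.evalFrom_of_forall_mem_step_eq fun a ha => (hloop a ha).2]
  have hequiv : SubwordEquiv n (w ++ T) (w' ++ T) :=
    .of_flatten_replicate_sublist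
      (List.append_subset.mpr ⟨List.subset_append_left w w', hT⟩)
      (List.append_subset.mpr ⟨List.subset_append_right w w', hT⟩)
      (List.sublist_append_right w T) (List.sublist_append_right w' T)
  have hacc : u ++ (w ++ T) ++ z ∈ M.accepts ↔ u ++ (w' ++ T) ++ z ∈ M.accepts :=
    hn _ _ (((SubwordEquiv.refl n u).append hequiv).append (SubwordEquiv.refl n z))
  simp only [DFA.mem_accepts, DFA.eval, DFA.evalFrom_of_append, hu, hq, hq'] at hacc
  exact hz hacc

/-- If in a minimal complete DFA there are three pairwise distinct states `p, q, q'`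
and words `w, w'` over `Σ(q) ∩ Σ(q')` (letters self-looping on both `q` and `q'`)
with `δ(p,w) = q` and `δ(p,w') = q'`, then the language is not piecewise testable. -/
theorem stmt1 {α σ : Type*} [Fintype α] [Fintype σ] (M : DFA α σ)
    (hreach : ∀ q : σ, ∃ w : List α, M.evalFrom M.start w = q)
    (hdist : ∀ p q : σ, p ≠ q → ∃ z : List α,
      ¬ (M.evalFrom p z ∈ M.accept ↔ M.evalFrom q z ∈ M.accept))
    (p q q' : σ) (hpq : p ≠ q) (hpq' : p ≠ q') (hqq' : q ≠ q')
    (w w' : List α)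
    (hw : ∀ a ∈ w, M.step q a = q ∧ M.step q' a = q')
    (hw' : ∀ a ∈ w', M.step q a = q ∧ M.step q' a = q')
    (hwq : M.evalFrom p w = q) (hwq' : M.evalFrom p w' = q') :
    ¬ PiecewiseTestable (M.accepts : Set (List α)) :=
  stmt1_general M hreach hdist p q q' hqq' w w' hw hw' hwq hwq'
end

section
/- Let Σ be a finite alphabet, L ⊆ Σ* a regular language, and M a minimal complete DFA recognizing L with finitely many states. Suppose that (1) M contains no nontrivial cycle, i.e., there are no two distinct states p ≠ q and words u, v ∈ Σ* with δ(p,u) = q and δ(q,v) = p, and (2) there are no three pairwise distinct states p, q, q' of M and words w, w' ∈ (Σ(q) ∩ Σ(q'))* with δ(p,w) = q and δ(p,w') = q'. Then L is piecewise testable. -/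
open List

section

variable {α σ : Type*}

theorem List.exists_eq_append_cons_of_not_forall {p : α → Prop} {l : List α}
    (h : ¬ ∀ c ∈ l, p c) : ∃ l₁ a l₂, l = l₁ ++ a :: l₂ ∧ (∀ c ∈ l₁, p c) ∧ ¬ p a := by
  induction l with
  | nil => simp at h
  | cons c l ih =>
    by_cases hc : p c
    · obtain ⟨l₁, a, l₂, rfl, hl₁, ha⟩ := ih (by simpa [hc] using h)
      exact ⟨c :: l₁, a, l₂, rfl, by simpa [hc] using hl₁, ha⟩
    · exact ⟨[], c, l, rfl, by simp, hc⟩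

theorem List.Sublist.cons_of_append_of_notMem {c : α} {t l₁ l₂ : List α}
    (h : c :: t <+ l₁ ++ l₂) (hc : c ∉ l₁) : c :: t <+ l₂ := by
  induction l₁ with
  | nil => simpa using h
  | cons d l₁ ih =>
    cases h with
    | cons _ h => exact ih h (fun hm => hc (mem_cons_of_mem d hm))
    | cons_cons _ _ => exact absurd mem_cons_self hc

theorem List.mem_of_mem_flatten_replicate {c : α} {u : List α} {t : ℕ}
    (h : c ∈ (replicate t u).flatten) : c ∈ u := by
  grind [mem_flatten]

theorem List.mem_flatten_replicate_of_mem {c : α} {u : List α} {t : ℕ} (ht : t ≠ 0)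
    (h : c ∈ u) : c ∈ (replicate t u).flatten :=
  mem_flatten.2 ⟨u, mem_replicate.2 ⟨ht, rfl⟩, h⟩

/-- Simon's congruence `x ∼ₖ y`. -/
def SimonEquiv (k : ℕ) (x y : List α) : Prop :=
  ∀ s : List α, s.length ≤ k → (s <+ x ↔ s <+ y)

namespace SimonEquiv

variable {k m : ℕ} {x y x₀ y₀ x' y' : List α} {a b : α}

theorem symm (h : SimonEquiv k x y) : SimonEquiv k y x :=
  fun s hs => (h s hs).symm

theorem mono (h : SimonEquiv k x y) (hmk : m ≤ k) : SimonEquiv m x y :=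
  fun s hs => h s (hs.trans hmk)

theorem mem_iff (h : SimonEquiv k x y) (hk : k ≠ 0) (c : α) : c ∈ x ↔ c ∈ y := by
  simpa using h [c] (by simp; omega)

section Decomposition

variable (h : SimonEquiv k (x₀ ++ a :: x') (y₀ ++ b :: y'))
include h

theorem cons_sublist_cons_of_sublist (ha : a ∉ y₀) {s : List α} (hs : s.length < k)
    (hsx : s <+ x') : a :: s <+ b :: y' :=
  ((h (a :: s) hs).1 ((hsx.cons_cons a).trans (sublist_append_right _ _))).cons_of_append_of_notMem
    ha

theorem of_append_cons (hk : m < k) (ha : a ∉ y₀) (hb : b ∉ x₀) : SimonEquiv m x' y' :=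
  fun s hs => ⟨fun hsx => (h.cons_sublist_cons_of_sublist ha (by omega) hsx).of_cons_cons,
    fun hsy => (h.symm.cons_sublist_cons_of_sublist hb (by omega) hsy).of_cons_cons⟩

/-- An `a` in front of a subword of `x'` can only be matched in `y'` after `b`, and a `b` in front
of a subword of `y'` only in `x'` after `a`; alternating the two builds up `(ba)ᵗ`. -/
theorem flatten_replicate_append_sublist (ha : a ∉ y₀) (hb : b ∉ x₀) (hab : a ≠ b) (t : ℕ)
    {s : List α} (hsx : s <+ x') (hk : 2 * t + s.length + 2 ≤ k) :
    (replicate t [b, a]).flatten ++ s <+ x' := by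
  induction t with
  | zero => simpa using hsx
  | succ t ih =>
    have hlen : ((replicate t [b, a]).flatten ++ s).length = 2 * t + s.length := by
      simp [length_flatten]; ring
    have hay : a :: ((replicate t [b, a]).flatten ++ s) <+ y' :=
      (h.cons_sublist_cons_of_sublist ha (by omega) (ih (by omega))).of_cons_of_ne hab
    have hbx := (h.symm.cons_sublist_cons_of_sublist hb (by simp; omega) hay).of_cons_of_ne hab.symm
    simpa [replicate_succ] using hbx

theorem flatten_replicate_append (ha : a ∉ y₀) (hb : b ∉ x₀) (hab : a ≠ b) (t : ℕ)
    (hk : m + 2 * t + 2 ≤ k) : SimonEquiv m x' ((replicate t [b, a]).flatten ++ x') := by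
  refine fun s hs => ⟨fun hsx => hsx.trans (sublist_append_right _ _), fun hsx => ?_⟩
  obtain ⟨s₁, s₂, rfl, hs₁, hs₂⟩ := sublist_append_iff.1 hsx
  simp only [length_append] at hs
  exact (hs₁.append (Sublist.refl s₂)).trans
    (h.flatten_replicate_append_sublist ha hb hab t hs₂ (by omega))

end Decomposition

end SimonEquiv

namespace DFA

variable (M : DFA α σ)

def Reaches (p q : σ) : Prop := ∃ w : List α, M.evalFrom p w = q

def IsAcyclic : Prop :=
  ¬ ∃ (p q : σ) (u v : List α), p ≠ q ∧ M.evalFrom p u = q ∧ M.evalFrom q v = p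

/-- No state `p` reaches two distinct states `q, q' ≠ p` by words over `Σ(q) ∩ Σ(q')`. -/
def NoCommonLoopFork : Prop :=
  ¬ ∃ (p q q' : σ) (w w' : List α),
    p ≠ q ∧ p ≠ q' ∧ q ≠ q' ∧
    (∀ a ∈ w, M.step q a = q ∧ M.step q' a = q') ∧
    (∀ a ∈ w', M.step q a = q ∧ M.step q' a = q') ∧
    M.evalFrom p w = q ∧ M.evalFrom p w' = q'

noncomputable def numReachable (p : σ) : ℕ := {q | M.Reaches p q}.ncard

variable {M} {p q : σ}

theorem Reaches.trans {r : σ} (hpq : M.Reaches p q) (hqr : M.Reaches q r) : M.Reaches p r := by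
  obtain ⟨u, rfl⟩ := hpq
  obtain ⟨v, rfl⟩ := hqr
  exact ⟨u ++ v, M.evalFrom_of_append p u v⟩

theorem evalFrom_eq_self_of_forall_step_eq {w : List α} (h : ∀ c ∈ w, M.step p c = p) :
    M.evalFrom p w = p := by
  induction w with
  | nil => rfl
  | cons c w ih => simp_all

theorem evalFrom_append_cons_of_forall_step_eq {w₀ w : List α} {a : α}
    (h : ∀ c ∈ w₀, M.step p c = p) : M.evalFrom p (w₀ ++ a :: w) = M.evalFrom (M.step p a) w := by
  rw [evalFrom_of_append, evalFrom_eq_self_of_forall_step_eq h, evalFrom_cons]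

theorem numReachable_pos [Finite σ] : 0 < M.numReachable p :=
  (Set.ncard_pos).2 ⟨p, [], rfl⟩

theorem numReachable_le_card [Fintype σ] : M.numReachable p ≤ Fintype.card σ :=
  (Set.ncard_le_card _).trans_eq Nat.card_eq_fintype_card

namespace IsAcyclic

variable (hM : M.IsAcyclic)
include hM

theorem eq_of_reaches (hpq : M.Reaches p q) (hqp : M.Reaches q p) : p = q := by
  by_contra hne
  obtain ⟨u, hu⟩ := hpq
  obtain ⟨v, hv⟩ := hqp
  exact hM ⟨p, q, u, v, hne, hu, hv⟩

theorem numReachable_lt [Finite σ] (hpq : M.Reaches p q) (hne : p ≠ q) :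
    M.numReachable q < M.numReachable p := by
  refine Set.ncard_lt_ncard ⟨fun r hqr => hpq.trans hqr, fun hsub => hne ?_⟩
  exact hM.eq_of_reaches hpq (hsub (show M.Reaches p p from ⟨[], rfl⟩))

theorem step_eq_of_evalFrom_eq {w : List α} (h : M.evalFrom p w = p) :
    ∀ c ∈ w, M.step p c = p := by
  induction w with
  | nil => simp
  | cons d w ih =>
    have hd : M.step p d = p := hM.eq_of_reaches ⟨w, h⟩ ⟨[d], rfl⟩
    rw [evalFrom_cons, hd] at h
    simpa [hd] using ih h

/-- By pigeonhole some power `uⁱ` leads to a state that `uʲ⁻ⁱ` leads back to; by acyclicity every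
letter of `u` loops there, so the run stays there. -/
theorem step_evalFrom_flatten_replicate [Fintype σ] (s : σ) {u : List α} {c : α} (hc : c ∈ u) :
    M.step (M.evalFrom s (replicate (Fintype.card σ) u).flatten) c =
      M.evalFrom s (replicate (Fintype.card σ) u).flatten := by
  set n := Fintype.card σ
  have hpow : ∀ i j, M.evalFrom s (replicate (i + j) u).flatten =
      M.evalFrom (M.evalFrom s (replicate i u).flatten) (replicate j u).flatten := by
    intro i j
    rw [replicate_add, flatten_append, evalFrom_of_append]
  obtain ⟨i, j, hij, hjn, heq⟩ : ∃ i j, i < j ∧ j ≤ n ∧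
      M.evalFrom s (replicate i u).flatten = M.evalFrom s (replicate j u).flatten := by
    obtain ⟨i, j, hne, heq⟩ := Fintype.exists_ne_map_eq_of_card_lt
      (fun i : Fin (n + 1) => M.evalFrom s (replicate i u).flatten) (by simp [n])
    rcases Fin.lt_or_lt_of_ne hne with h | h
    · exact ⟨i, j, h, by omega, heq⟩
    · exact ⟨j, i, h, by omega, heq.symm⟩
  set q := M.evalFrom s (replicate i u).flatten
  have hloop : ∀ d ∈ u, M.step q d = q := by
    have hcycle : M.evalFrom q (replicate (j - i) u).flatten = q := by
      rw [← hpow, Nat.add_sub_cancel' hij.le, ← heq]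
    exact fun d hd => hM.step_eq_of_evalFrom_eq hcycle d
      (mem_flatten_replicate_of_mem (by omega) hd)
  have hstay : M.evalFrom s (replicate n u).flatten = q := by
    rw [← Nat.add_sub_cancel' (hij.le.trans hjn), hpow]
    exact evalFrom_eq_self_of_forall_step_eq fun d hd => hloop d (mem_of_mem_flatten_replicate hd)
  rw [hstay]
  exact hloop c hc

theorem evalFrom_cons_flatten_replicate_eq [Fintype σ] (hF : M.NoCommonLoopFork) {a : α}
    (b : α) (hpa : M.step p a ≠ p) :
    M.evalFrom p (a :: (replicate (Fintype.card σ) [b, a]).flatten) =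
      M.evalFrom p (b :: (replicate (Fintype.card σ) [a, b]).flatten) := by
  set q₁ := M.evalFrom p (a :: (replicate (Fintype.card σ) [b, a]).flatten)
  set q₂ := M.evalFrom p (b :: (replicate (Fintype.card σ) [a, b]).flatten)
  have hloops : ∀ c, c = a ∨ c = b → M.step q₁ c = q₁ ∧ M.step q₂ c = q₂ := by
    rintro c (rfl | rfl) <;>
      exact ⟨hM.step_evalFrom_flatten_replicate _ (by simp),
        hM.step_evalFrom_flatten_replicate _ (by simp)⟩
  have hletters : ∀ {d e : α}, d = a ∨ d = b → e = a ∨ e = b →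
      ∀ c ∈ d :: (replicate (Fintype.card σ) [e, d]).flatten,
        M.step q₁ c = q₁ ∧ M.step q₂ c = q₂ := by
    intro d e hd he c hc
    rcases mem_cons.1 hc with rfl | hc
    · exact hloops c hd
    · have := mem_of_mem_flatten_replicate hc
      simp only [mem_cons, not_mem_nil, or_false] at this
      rcases this with rfl | rfl
      exacts [hloops c he, hloops c hd]
  by_contra hne
  refine hF ⟨p, q₁, q₂, _, _, ?_, ?_, hne, hletters (.inl rfl) (.inr rfl),
    hletters (.inr rfl) (.inl rfl), rfl, rfl⟩ <;> intro h <;> apply hpa <;> rw [h]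
  exacts [(hloops a (.inl rfl)).1, (hloops a (.inl rfl)).2]

theorem evalFrom_eq_of_simonEquiv_of_forall_reaches [Fintype σ] (hF : M.NoCommonLoopFork)
    {k : ℕ} (ih : ∀ q, M.Reaches p q → p ≠ q → ∀ x y : List α,
      SimonEquiv k x y → M.evalFrom q x = M.evalFrom q y)
    {x y : List α} (h : SimonEquiv (k + 2 * Fintype.card σ + 2) x y) :
    M.evalFrom p x = M.evalFrom p y := by
  set n := Fintype.card σ
  by_cases hx : ∀ c ∈ x, M.step p c = p
  · have hy : ∀ c ∈ y, M.step p c = p := fun c hc => hx c ((h.mem_iff (by omega) c).2 hc)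
    rw [evalFrom_eq_self_of_forall_step_eq hx, evalFrom_eq_self_of_forall_step_eq hy]
  obtain ⟨x₀, a, x', rfl, hx₀, hpa⟩ := exists_eq_append_cons_of_not_forall hx
  obtain ⟨y₀, b, y', rfl, hy₀, hpb⟩ := exists_eq_append_cons_of_not_forall fun hy =>
    hx fun c hc => hy c ((h.mem_iff (by omega) c).1 hc)
  have ha : a ∉ y₀ := fun hm => hpa (hy₀ a hm)
  have hb : b ∉ x₀ := fun hm => hpb (hx₀ b hm)
  have htail : SimonEquiv k x' y' := h.of_append_cons (by omega) ha hb
  rw [evalFrom_append_cons_of_forall_step_eq hx₀, evalFrom_append_cons_of_forall_step_eq hy₀]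
  obtain rfl | hab := eq_or_ne a b
  · exact ih _ ⟨[a], rfl⟩ (Ne.symm hpa) _ _ htail
  set q := M.evalFrom p (a :: (replicate n [b, a]).flatten) with hq
  have hpq : p ≠ q := fun hpq =>
    hpa (by rw [hpq]; exact hM.step_evalFrom_flatten_replicate _ (by simp))
  calc M.evalFrom (M.step p a) x'
      = M.evalFrom (M.step p a) ((replicate n [b, a]).flatten ++ x') :=
        ih _ ⟨[a], rfl⟩ (Ne.symm hpa) _ _ (h.flatten_replicate_append ha hb hab n le_rfl)
    _ = M.evalFrom q x' := evalFrom_of_append ..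
    _ = M.evalFrom q y' := ih q ⟨_, rfl⟩ hpq _ _ htail
    _ = M.evalFrom (M.step p b) ((replicate n [a, b]).flatten ++ y') := by
        rw [hq, hM.evalFrom_cons_flatten_replicate_eq hF b hpa, evalFrom_of_append, evalFrom_cons]
    _ = M.evalFrom (M.step p b) y' :=
        (ih _ ⟨[b], rfl⟩ (Ne.symm hpb) _ _
          (h.symm.flatten_replicate_append hb ha hab.symm n le_rfl)).symm

theorem evalFrom_eq_of_simonEquiv [Fintype σ] (hF : M.NoCommonLoopFork) (p : σ)
    {x y : List α} (h : SimonEquiv ((2 * Fintype.card σ + 2) * M.numReachable p) x y) :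
    M.evalFrom p x = M.evalFrom p y := by
  induction hN : M.numReachable p using Nat.strong_induction_on generalizing p x y with
  | _ N ih =>
    obtain ⟨N, rfl⟩ : ∃ N', N = N' + 1 := Nat.exists_eq_add_one.2 (hN ▸ numReachable_pos)
    refine hM.evalFrom_eq_of_simonEquiv_of_forall_reaches hF (k := (2 * Fintype.card σ + 2) * N)
      (fun q hpq hne x y hxy => ?_) (h.mono (le_of_eq (by rw [hN]; ring)))
    have hlt : M.numReachable q < N + 1 := hN ▸ hM.numReachable_lt hpq hne
    exact ih _ hlt q (hxy.mono (Nat.mul_le_mul_left _ (by omega))) rfl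

end IsAcyclic

end DFA

namespace PiecewiseTestable

theorem univ : PiecewiseTestable (Set.univ : Set (List α)) := by
  simpa using piece (α := α) []

theorem biUnion {ι : Type*} {s : Set ι} (hs : s.Finite) {f : ι → Set (List α)}
    (hf : ∀ i ∈ s, PiecewiseTestable (f i)) : PiecewiseTestable (⋃ i ∈ s, f i) := by
  induction s, hs using Set.Finite.induction_on with
  | empty => simpa using univ.compl
  | insert _ _ ih =>
    rw [Set.biUnion_insert]
    exact (hf _ (Set.mem_insert _ _)).union (ih fun i hi => hf i (Set.mem_insert_of_mem _ hi))

theorem biInter {ι : Type*} {s : Set ι} (hs : s.Finite) {f : ι → Set (List α)}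
    (hf : ∀ i ∈ s, PiecewiseTestable (f i)) : PiecewiseTestable (⋂ i ∈ s, f i) := by
  simpa [Set.compl_iUnion₂] using (biUnion hs fun i hi => (hf i hi).compl).compl

theorem setOf_sublist_iff (s : List α) (P : Prop) :
    PiecewiseTestable {w | s <+ w ↔ P} := by
  by_cases hP : P
  · simpa [hP] using piece s
  · simpa [hP, Set.compl_ofPred] using (piece s).compl

theorem of_simonEquiv [Finite α] (k : ℕ) {L : Set (List α)}
    (hL : ∀ x y, SimonEquiv k x y → x ∈ L → y ∈ L) : PiecewiseTestable L := by
  set T := {s : List α | s.length ≤ k}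
  set subwords : List α → Set (List α) := fun w => {s ∈ T | s <+ w}
  have hunion : L = ⋃ S ∈ subwords '' L, ⋂ s ∈ T, {w | s <+ w ↔ s ∈ S} := by
    ext w
    simp only [Set.mem_iUnion, Set.mem_iInter, Set.mem_image, exists_prop]
    refine ⟨fun hw => ⟨_, ⟨w, hw, rfl⟩, fun s hs => by simp [subwords, hs]⟩, ?_⟩
    rintro ⟨_, ⟨x, hx, rfl⟩, hxw⟩
    exact hL x w (fun s hs => by simpa [subwords, hs, T] using (hxw s hs).symm) hx
  rw [hunion]
  refine biUnion ?_ fun S _ => biInter (finite_length_le α k) fun s _ => setOf_sublist_iff s _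
  exact (finite_length_le α k).finite_subsets.subset
    (Set.image_subset_iff.2 fun w _ => Set.sep_subset _ _)

end PiecewiseTestable

end

theorem stmt2_general {α σ : Type*} [Fintype α] [Fintype σ] (M : DFA α σ)
    (hnocycle : ¬ ∃ (p q : σ) (u v : List α),
      p ≠ q ∧ M.evalFrom p u = q ∧ M.evalFrom q v = p)
    (hnopair : ¬ ∃ (p q q' : σ) (w w' : List α),
      p ≠ q ∧ p ≠ q' ∧ q ≠ q' ∧
      (∀ a ∈ w, M.step q a = q ∧ M.step q' a = q') ∧
      (∀ a ∈ w', M.step q a = q ∧ M.step q' a = q') ∧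
      M.evalFrom p w = q ∧ M.evalFrom p w' = q') :
    PiecewiseTestable (M.accepts : Set (List α)) := by
  refine .of_simonEquiv ((2 * Fintype.card σ + 2) * Fintype.card σ) fun x y hxy hx => ?_
  have hk : (2 * Fintype.card σ + 2) * M.numReachable M.start ≤
      (2 * Fintype.card σ + 2) * Fintype.card σ :=
    Nat.mul_le_mul_left _ DFA.numReachable_le_card
  have heval :=
    DFA.IsAcyclic.evalFrom_eq_of_simonEquiv (M := M) hnocycle hnopair M.start (hxy.mono hk)
  change M.evalFrom M.start y ∈ M.accept
  exact heval ▸ hx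

/-- If a minimal complete DFA has no nontrivial cycle and no three pairwise distinct
states `p, q, q'` with words `w, w'` over `Σ(q) ∩ Σ(q')` such that `δ(p,w) = q` and
`δ(p,w') = q'`, then its language is piecewise testable. -/
theorem stmt2 {α σ : Type*} [Fintype α] [Fintype σ] (M : DFA α σ)
    (hreach : ∀ q : σ, ∃ w : List α, M.evalFrom M.start w = q)
    (hdist : ∀ p q : σ, p ≠ q → ∃ z : List α,
      ¬ (M.evalFrom p z ∈ M.accept ↔ M.evalFrom q z ∈ M.accept))
    (hnocycle : ¬ ∃ (p q : σ) (u v : List α),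
      p ≠ q ∧ M.evalFrom p u = q ∧ M.evalFrom q v = p)
    (hnopair : ¬ ∃ (p q q' : σ) (w w' : List α),
      p ≠ q ∧ p ≠ q' ∧ q ≠ q' ∧
      (∀ a ∈ w, M.step q a = q ∧ M.step q' a = q') ∧
      (∀ a ∈ w', M.step q a = q ∧ M.step q' a = q') ∧
      M.evalFrom p w = q ∧ M.evalFrom p w' = q') :
    PiecewiseTestable (M.accepts : Set (List α)) :=
  stmt2_general M hnocycle hnopair
end

section
/- Let A and B be finite automata over an alphabet Σ with initial states s_A and s_B respectively. Suppose there exist words u_A, v_A ∈ Σ* such that A has a path from s_A under u_A to an accepting state and from that accepting state under v_A back to s_A, and words u_B, v_B ∈ Σ* such that B has a path from s_B under u_B to an accepting state and from that accepting state under v_B back to s_B, with alp(u_A v_A) = alp(u_B v_B). Then there exists an infinite tower between L(A) and L(B). -/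
/-- `w` is an infinite tower between the languages `K` and `L`:
`w 0 ∈ K ∪ L`, each word is a subsequence of the next, a word in `K` is followed by a
word in `L`, and a word in `L` is followed by a word in `K`. -/
def IsInfiniteTower {α : Type*} (K L : Set (List α)) (w : ℕ → List α) : Prop :=
  w 0 ∈ K ∪ L ∧ (∀ i, (w i).Sublist (w (i + 1))) ∧
    (∀ i, w i ∈ K → w (i + 1) ∈ L) ∧ (∀ i, w i ∈ L → w (i + 1) ∈ K)

/-- There exists an infinite tower between `K` and `L`. -/
def HasInfiniteTower {α : Type*} (K L : Set (List α)) : Prop :=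
  ∃ w : ℕ → List α, IsInfiniteTower K L w

lemma aux_sublist_pow {α : Type*} (x y : List α) (h : ∀ a ∈ x, a ∈ y) :
    x.Sublist (List.replicate x.length y).flatten := by
  induction x with
  | nil => simp
  | cons a x ih =>
    have h1 : [a].Sublist y := List.singleton_sublist.2 (h a (by simp))
    have h2 : x.Sublist (List.replicate x.length y).flatten :=
      ih (fun b hb => h b (by simp [hb]))
    simpa [List.replicate_succ] using List.Sublist.append h1 h2

lemma aux_evalFrom_append {α σ : Type*} (M : NFA α σ) (S : Set σ) (x y : List α) :
    M.evalFrom S (x ++ y) = M.evalFrom (M.evalFrom S x) y := by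
  simp [NFA.evalFrom, List.foldl_append]

lemma aux_evalFrom_mono {α σ : Type*} (M : NFA α σ) {S T : Set σ} (h : S ⊆ T) (x : List α) :
    M.evalFrom S x ⊆ M.evalFrom T x := by
  induction x generalizing S T with
  | nil => simpa [NFA.evalFrom]
  | cons a x ih =>
    have : M.stepSet S a ⊆ M.stepSet T a := by
      intro s hs
      rw [NFA.mem_stepSet] at hs ⊢
      obtain ⟨t, ht, hts⟩ := hs
      exact ⟨t, h ht, hts⟩
    simpa [NFA.evalFrom] using ih this

lemma aux_loop {α σ : Type*} (M : NFA α σ) (s : σ) (x : List α)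
    (h : s ∈ M.evalFrom {s} x) (n : ℕ) :
    s ∈ M.evalFrom {s} (List.replicate n x).flatten := by
  induction n with
  | zero => simp [NFA.evalFrom]
  | succ n ih =>
    rw [List.replicate_succ, List.flatten_cons, aux_evalFrom_append]
    exact aux_evalFrom_mono M (Set.singleton_subset_iff.2 h) _ ih

/-- If finite automata `A` and `B` have cycles through their initial states and some
accepting states, over the same alphabet of occurring letters, then there is an
infinite tower between `L(A)` and `L(B)`. -/
theorem stmt8 {α σA σB : Type*} [Fintype α] [Fintype σA] [Fintype σB]
    (A : NFA α σA) (B : NFA α σB) (sA : σA) (sB : σB)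
    (hA : A.start = {sA}) (hB : B.start = {sB})
    (uA vA uB vB : List α) (fA : σA) (fB : σB)
    (hfA : fA ∈ A.accept) (huA : fA ∈ A.evalFrom {sA} uA) (hvA : sA ∈ A.evalFrom {fA} vA)
    (hfB : fB ∈ B.accept) (huB : fB ∈ B.evalFrom {sB} uB) (hvB : sB ∈ B.evalFrom {fB} vB)
    (halp : ∀ a : α, a ∈ uA ++ vA ↔ a ∈ uB ++ vB) :
    HasInfiniteTower (A.accepts : Set (List α)) (B.accepts : Set (List α)) := by
  set c : List α := uA ++ vA with hc
  set d : List α := uB ++ vB with hd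
  -- cycles at initial states
  have hcycA : sA ∈ A.evalFrom {sA} c := by
    rw [hc, aux_evalFrom_append]
    exact aux_evalFrom_mono A (Set.singleton_subset_iff.2 huA) _ hvA
  have hcycB : sB ∈ B.evalFrom {sB} d := by
    rw [hd, aux_evalFrom_append]
    exact aux_evalFrom_mono B (Set.singleton_subset_iff.2 huB) _ hvB
  -- the words
  set tA : ℕ → List α := fun n => (List.replicate n c).flatten ++ uA with htA
  set sBw : ℕ → List α := fun n => (List.replicate n d).flatten ++ uB with hsBw
  have hmemA : ∀ n, tA n ∈ A.accepts := by
    intro n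
    rw [NFA.mem_accepts]
    refine ⟨fA, hfA, ?_⟩
    rw [hA, htA]
    simp only
    rw [aux_evalFrom_append]
    exact aux_evalFrom_mono A (Set.singleton_subset_iff.2 (aux_loop A sA c hcycA n)) _ huA
  have hmemB : ∀ n, sBw n ∈ B.accepts := by
    intro n
    rw [NFA.mem_accepts]
    refine ⟨fB, hfB, ?_⟩
    rw [hB, hsBw]
    simp only
    rw [aux_evalFrom_append]
    exact aux_evalFrom_mono B (Set.singleton_subset_iff.2 (aux_loop B sB d hcycB n)) _ huB
  -- letters
  have hletA : ∀ n, ∀ a ∈ tA n, a ∈ d := by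
    intro n a ha
    rw [htA] at ha
    simp only [List.mem_append, List.mem_flatten] at ha
    have hac : a ∈ c := by
      rcases ha with ⟨l, hl, hal⟩ | ha
      · rw [List.eq_of_mem_replicate hl] at hal; exact hal
      · rw [hc]; exact List.mem_append.2 (Or.inl ha)
    exact (halp a).1 hac
  have hletB : ∀ n, ∀ a ∈ sBw n, a ∈ c := by
    intro n a ha
    rw [hsBw] at ha
    simp only [List.mem_append, List.mem_flatten] at ha
    have had : a ∈ d := by
      rcases ha with ⟨l, hl, hal⟩ | ha
      · rw [List.eq_of_mem_replicate hl] at hal; exact hal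
      · rw [hd]; exact List.mem_append.2 (Or.inl ha)
    exact (halp a).2 had
  have hsubAB : ∀ n, (tA n).Sublist (sBw (tA n).length) := by
    intro n
    exact (aux_sublist_pow _ _ (hletA n)).trans (List.sublist_append_left _ _)
  have hsubBA : ∀ n, (sBw n).Sublist (tA (sBw n).length) := by
    intro n
    exact (aux_sublist_pow _ _ (hletB n)).trans (List.sublist_append_left _ _)
  by_cases hmix : ∃ x, x ∈ A.accepts ∧ x ∈ B.accepts
  · obtain ⟨x, hxA, hxB⟩ := hmix
    exact ⟨fun _ => x, Or.inl hxA, fun i => List.Sublist.refl x,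
      fun i _ => hxB, fun i _ => hxA⟩
  · push_neg at hmix
    set w : ℕ → List α := fun n =>
      Nat.rec (tA 0) (fun i prev => if Even i then sBw prev.length else tA prev.length) n
      with hw
    have hstep : ∀ i, w (i + 1) = if Even i then sBw (w i).length else tA (w i).length :=
      fun i => rfl
    have hshape : ∀ i, (Even i → ∃ n, w i = tA n) ∧ (¬ Even i → ∃ n, w i = sBw n) := by
      intro i
      cases i with
      | zero => exact ⟨fun _ => ⟨0, rfl⟩, fun h => absurd Even.zero h⟩
      | succ i =>
        by_cases h : Even i
        · refine ⟨fun h' => ?_, fun _ => ⟨(w i).length, by rw [hstep, if_pos h]⟩⟩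
          exact absurd h (by simpa [Nat.even_add_one] using h')
        · refine ⟨fun _ => ⟨(w i).length, by rw [hstep, if_neg h]⟩, fun h' => ?_⟩
          exact absurd (by simpa [Nat.even_add_one] using h) h'
    have hwA : ∀ i, Even i → w i ∈ A.accepts := by
      intro i hi
      obtain ⟨n, hn⟩ := (hshape i).1 hi
      rw [hn]; exact hmemA n
    have hwB : ∀ i, ¬ Even i → w i ∈ B.accepts := by
      intro i hi
      obtain ⟨n, hn⟩ := (hshape i).2 hi
      rw [hn]; exact hmemB n
    refine ⟨w, Or.inl (hwA 0 Even.zero), ?_, ?_, ?_⟩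
    · intro i
      rw [hstep]
      by_cases h : Even i
      · obtain ⟨n, hn⟩ := (hshape i).1 h
        rw [if_pos h, hn]; exact hsubAB n
      · obtain ⟨n, hn⟩ := (hshape i).2 h
        rw [if_neg h, hn]; exact hsubBA n
    · intro i hi
      by_cases h : Even i
      · rw [hstep, if_pos h]; exact hmemB _
      · exact absurd (hwB i h) (fun h2 => hmix _ hi h2)
    · intro i hi
      by_cases h : Even i
      · exact absurd hi (fun h2 => hmix _ (hwA i h) h2)
      · rw [hstep, if_neg h]; exact hmemA _
end
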